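/- Let G be the group of all homeomorphisms f_σ of 𝔅 with σ ranging over all permutations of the positive integers. Then (𝔅,G) is not pseudo-co-decomposable to distal transformation semigroups: for every family (S_α)_{α∈Γ} of subsemigroups of G, each containing the identity, whose union generates G, and such that for all α_1,…,α_n ∈ Γ, every x ∈ 𝔅 and every permutation m of {1,…,n} the orbit sets satisfy x S_{α_1}⋯S_{α_n} = x S_{α_{m_1}}⋯S_{α_{m_n}}, there exists α ∈ Γ such that the action of S_α on 𝔅 is not distal. -/
import Mathlib


open Pointwise Classical

/-- 𝔅 = {0} ∪ {1/n : n a positive integer} as a subspace of ℝ. -/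
def Bset : Set ℝ := {x | x = 0 ∨ ∃ n : ℕ+, x = 1 / ((n : ℕ) : ℝ)}

/-- The homeomorphism `f_σ` of `𝔅` induced by a permutation `σ` of the positive
integers: `(1/k) f_σ = 1/σ(k)` and `0 f_σ = 0`. -/
noncomputable def fPerm (σ : Equiv.Perm ℕ+) (x : Bset) : Bset :=
  if h : ∃ n : ℕ+, (x : ℝ) = 1 / ((n : ℕ) : ℝ) then
    ⟨1 / (((σ h.choose : ℕ+) : ℕ) : ℝ), Or.inr ⟨σ h.choose, rfl⟩⟩
  else ⟨0, Or.inl rfl⟩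

/-- The pair `(x, y)` is proximal for the set `S` of self-maps of `X`. -/
def IsProximal {X : Type*} [TopologicalSpace X] (S : Set (X → X)) (x y : X) : Prop :=
  ∃ z : X, (z, z) ∈ closure {p : X × X | ∃ f ∈ S, p = (f x, f y)}

/-- The action of the set `S` of self-maps of `X` is distal. -/
def IsDistalAction {X : Type*} [TopologicalSpace X] (S : Set (X → X)) : Prop :=
  ∀ x y : X, IsProximal S x y → x = y

/-- The set of self-maps of `𝔅` induced by a set of permutations. -/
noncomputable def permAct (S : Set (Equiv.Perm ℕ+)) : Set (Bset → Bset) :=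
  {f | ∃ σ ∈ S, f = fPerm σ}

/-- The orbit `xS` of a point of `𝔅`. -/
def pointOrbit (x : Bset) (S : Set (Equiv.Perm ℕ+)) : Set Bset :=
  {y | ∃ σ ∈ S, y = fPerm σ x}

/-- `P S = {x σ : x ∈ P, σ ∈ S}`, the action of a set of permutations on a set of points. -/
def actSet (P : Set Bset) (S : Set (Equiv.Perm ℕ+)) : Set Bset :=
  {y | ∃ x ∈ P, ∃ σ ∈ S, y = fPerm σ x}

/-- `T_n`: permutations fixing every `k > n`. -/
def TnSet (n : ℕ+) : Set (Equiv.Perm ℕ+) := {σ | ∀ k : ℕ+, n < k → σ k = k}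

/-- `T`: the finitary permutations of the positive integers. -/
def Tfin : Set (Equiv.Perm ℕ+) := {σ | ∃ n : ℕ+, ∀ k : ℕ+, n < k → σ k = k}

noncomputable def onePt : Bset := ⟨1, Or.inr ⟨1, by norm_num⟩⟩
def zeroPt : Bset := ⟨0, Or.inl rfl⟩

-- auxiliary lemmas


noncomputable def pt (k : ℕ+) : Bset := ⟨1 / ((k:ℕ):ℝ), Or.inr ⟨k, rfl⟩⟩

lemma inv_pnat_inj {k n : ℕ+} (h : (1 / ((k:ℕ):ℝ)) = 1 / ((n:ℕ):ℝ)) : k = n := by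
  have hk : ((k:ℕ):ℝ) ≠ 0 := by positivity
  have hn : ((n:ℕ):ℝ) ≠ 0 := by positivity
  field_simp at h
  exact_mod_cast h.symm

lemma pt_inj : Function.Injective pt := by
  intro a b h
  exact inv_pnat_inj (congrArg Subtype.val h)

lemma pt_cases (x : Bset) : x = zeroPt ∨ ∃ k, x = pt k := by
  rcases x.2 with h | ⟨k, h⟩
  · exact Or.inl (Subtype.ext h)
  · exact Or.inr ⟨k, Subtype.ext h⟩

lemma fPerm_pt (σ : Equiv.Perm ℕ+) (k : ℕ+) : fPerm σ (pt k) = pt (σ k) := by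
  have h : ∃ n : ℕ+, ((pt k : Bset) : ℝ) = 1 / ((n : ℕ) : ℝ) := ⟨k, rfl⟩
  have hc : h.choose = k := (inv_pnat_inj h.choose_spec.symm)
  have hsc : σ h.choose = σ k := by rw [hc]
  simp only [fPerm, dif_pos h, hsc]
  rfl

lemma fPerm_zero (σ : Equiv.Perm ℕ+) : fPerm σ zeroPt = zeroPt := by
  have h : ¬ ∃ n : ℕ+, ((zeroPt : Bset) : ℝ) = 1 / ((n : ℕ) : ℝ) := by
    rintro ⟨n, hn⟩
    have hne : ((n:ℕ):ℝ) ≠ 0 := by positivity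
    simp [zeroPt] at hn
    exact absurd hn.symm (by simp [hne])
  simp only [fPerm, dif_neg h]
  rfl

lemma fPerm_one (x : Bset) : fPerm 1 x = x := by
  rcases pt_cases x with rfl | ⟨k, rfl⟩
  · exact fPerm_zero 1
  · rw [fPerm_pt]; rfl

lemma fPerm_mul (σ τ : Equiv.Perm ℕ+) (x : Bset) :
    fPerm (σ * τ) x = fPerm σ (fPerm τ x) := by
  rcases pt_cases x with rfl | ⟨k, rfl⟩
  · rw [fPerm_zero, fPerm_zero, fPerm_zero]
  · rw [fPerm_pt, fPerm_pt, fPerm_pt]; rfl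

-- actSet lemmas

lemma actSet_mono {P Q : Set Bset} (h : P ⊆ Q) (S : Set (Equiv.Perm ℕ+)) :
    actSet P S ⊆ actSet Q S := by
  rintro y ⟨x, hx, σ, hσ, rfl⟩; exact ⟨x, h hx, σ, hσ, rfl⟩

lemma subset_actSet {P : Set Bset} {S : Set (Equiv.Perm ℕ+)}
    (h1 : (1 : Equiv.Perm ℕ+) ∈ S) : P ⊆ actSet P S :=
  fun x hx => ⟨x, hx, 1, h1, (fPerm_one x).symm⟩

lemma actSet_actSet {P : Set Bset} {S : Set (Equiv.Perm ℕ+)}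
    (h1 : (1 : Equiv.Perm ℕ+) ∈ S) (hc : ∀ σ ∈ S, ∀ τ ∈ S, σ * τ ∈ S) :
    actSet (actSet P S) S = actSet P S := by
  apply Set.Subset.antisymm
  · rintro y ⟨x, ⟨w, hw, σ, hσ, rfl⟩, τ, hτ, rfl⟩
    exact ⟨w, hw, τ * σ, hc τ hτ σ hσ, (fPerm_mul τ σ w).symm⟩
  · exact subset_actSet h1

lemma fold_mono : ∀ (L : List (Set (Equiv.Perm ℕ+))) {P Q : Set Bset}, P ⊆ Q →
    L.foldl actSet P ⊆ L.foldl actSet Q := by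
  intro L
  induction L with
  | nil => intro P Q h; exact h
  | cons S L ih => intro P Q h; exact ih (actSet_mono h S)

section family
variable {Γ : Type*} (Ssub : Γ → Set (Equiv.Perm ℕ+))
variable (hid : ∀ α, 1 ∈ Ssub α)
variable (hclosed : ∀ α, ∀ σ ∈ Ssub α, ∀ τ ∈ Ssub α, σ * τ ∈ Ssub α)

include hid in
lemma subset_fold : ∀ (l : List Γ) (P : Set Bset), P ⊆ (l.map Ssub).foldl actSet P := by
  intro l
  induction l with
  | nil => intro P; exact subset_refl P
  | cons a l ih => intro P; exact (subset_actSet (hid a)).trans (ih (actSet P (Ssub a)))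

/-- duplicate each entry of a list -/
def dbl {α : Type*} : List α → List α
  | [] => []
  | a :: t => a :: a :: dbl t

lemma perm_dbl {α : Type*} : ∀ (l : List α), (l ++ l).Perm (dbl l) := by
  intro l
  induction l with
  | nil => simp [dbl]
  | cons a t ih =>
    show (a :: (t ++ a :: t)).Perm (a :: a :: dbl t)
    refine (List.Perm.cons a ?_)
    exact (List.perm_middle).trans (List.Perm.cons a ih)

include hid hclosed in
lemma collapse_dbl : ∀ (l : List Γ) (P : Set Bset),
    ((dbl l).map Ssub).foldl actSet P = (l.map Ssub).foldl actSet P := by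
  intro l
  induction l with
  | nil => intro P; rfl
  | cons a t ih =>
    intro P
    show ((dbl t).map Ssub).foldl actSet (actSet (actSet P (Ssub a)) (Ssub a)) =
      (t.map Ssub).foldl actSet (actSet P (Ssub a))
    rw [actSet_actSet (hid a) (hclosed a), ih]

variable (hpseudo : ∀ l l' : List Γ, l.Perm l' → ∀ x : Bset,
      (l.map Ssub).foldl actSet {x} = (l'.map Ssub).foldl actSet {x})

include hid hclosed hpseudo in
lemma fold_double (l : List Γ) (x : Bset) :
    ((l ++ l).map Ssub).foldl actSet {x} = (l.map Ssub).foldl actSet {x} := by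
  rw [hpseudo (l ++ l) (dbl l) (perm_dbl l) x, collapse_dbl Ssub hid hclosed]

/-- `m`-fold repetition of a list -/
def repL {α : Type*} (l : List α) : ℕ → List α
  | 0 => []
  | m + 1 => l ++ repL l m

include hid hclosed hpseudo in
lemma fold_rep (l : List Γ) : ∀ (m : ℕ) (x : Bset),
    ((repL l m).map Ssub).foldl actSet {x} ⊆ (l.map Ssub).foldl actSet {x} := by
  intro m
  induction m with
  | zero =>
    intro x
    exact (Set.singleton_subset_iff.2 (subset_fold Ssub hid l {x} rfl))
  | succ m ih =>
    intro x
    have h1 : ((repL l (m+1)).map Ssub).foldl actSet {x} =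
        (((repL l m) ++ l).map Ssub).foldl actSet {x} :=
      hpseudo _ _ List.perm_append_comm x
    rw [h1, List.map_append, List.foldl_append]
    calc ((l.map Ssub)).foldl actSet (((repL l m).map Ssub).foldl actSet {x})
        ⊆ (l.map Ssub).foldl actSet ((l.map Ssub).foldl actSet {x}) :=
          fold_mono _ (ih x)
      _ = ((l ++ l).map Ssub).foldl actSet {x} := by rw [List.map_append, List.foldl_append]
      _ = (l.map Ssub).foldl actSet {x} := fold_double Ssub hid hclosed hpseudo l x

lemma exists_list (hgen : Subsemigroup.closure (⋃ α, Ssub α) = (⊤ : Subsemigroup (Equiv.Perm ℕ+)))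
    (σ : Equiv.Perm ℕ+) :
    ∃ l : List Γ, ∀ x : Bset, fPerm σ x ∈ (l.map Ssub).foldl actSet {x} := by
  have hσ : σ ∈ Subsemigroup.closure (⋃ α, Ssub α) := by rw [hgen]; trivial
  refine Subsemigroup.closure_induction
    (p := fun τ _ => ∃ l : List Γ, ∀ x : Bset, fPerm τ x ∈ (l.map Ssub).foldl actSet {x})
    ?_ ?_ hσ
  · intro τ hτ
    rcases Set.mem_iUnion.1 hτ with ⟨α, hα⟩
    exact ⟨[α], fun x => ⟨x, rfl, τ, hα, rfl⟩⟩
  · rintro σ τ _ _ ⟨lσ, hlσ⟩ ⟨lτ, hlτ⟩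
    refine ⟨lτ ++ lσ, fun x => ?_⟩
    rw [List.map_append, List.foldl_append, fPerm_mul]
    exact fold_mono _ (Set.singleton_subset_iff.2 (hlτ x)) (hlσ (fPerm τ x))

include hid hclosed hpseudo in
lemma powOrbit_mem (l : List Γ) (σ : Equiv.Perm ℕ+)
    (hl : ∀ x : Bset, fPerm σ x ∈ (l.map Ssub).foldl actSet {x}) :
    ∀ (m : ℕ) (x : Bset), fPerm (σ ^ m) x ∈ (l.map Ssub).foldl actSet {x} := by
  have key : ∀ (m : ℕ) (x : Bset), fPerm (σ ^ m) x ∈ ((repL l m).map Ssub).foldl actSet {x} := by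
    intro m
    induction m with
    | zero => intro x; rw [pow_zero, fPerm_one]; exact rfl
    | succ m ih =>
      intro x
      rw [pow_succ, fPerm_mul]
      show fPerm (σ ^ m) (fPerm σ x) ∈ ((l ++ repL l m).map Ssub).foldl actSet {x}
      rw [List.map_append, List.foldl_append]
      exact fold_mono _ (Set.singleton_subset_iff.2 (hl x)) (ih (fPerm σ x))
  exact fun m x => fold_rep Ssub hid hclosed hpseudo l m x (key m x)

end family

-- distality forces finite orbits

lemma orb_finite {S : Set (Equiv.Perm ℕ+)} (hdist : IsDistalAction (permAct S)) (k : ℕ+) :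
    {m : ℕ+ | ∃ σ ∈ S, m = σ k}.Finite := by
  by_contra hinf
  have hub : ∀ N : ℕ, ∃ σ, σ ∈ S ∧ N < ((σ k : ℕ+) : ℕ) := by
    intro N
    by_contra hb; push_neg at hb
    apply hinf
    apply Set.Finite.subset (Set.Finite.preimage
      (Set.injOn_of_injective PNat.coe_injective) (Set.finite_Iic N))
    rintro m ⟨σ, hσ, rfl⟩
    exact hb σ hσ
  choose σf hσf hlt using hub
  have hzk : zeroPt ≠ pt k := by
    intro h
    have h0 : (0:ℝ) = 1 / ((k:ℕ):ℝ) := congrArg Subtype.val h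
    have : (0:ℝ) < 1 / ((k:ℕ):ℝ) := by positivity
    exact absurd h0.symm (ne_of_gt this)
  apply hzk
  apply hdist
  refine ⟨zeroPt, ?_⟩
  have htend : Filter.Tendsto (fun N : ℕ => ((zeroPt, pt (σf N k)) : Bset × Bset))
      Filter.atTop (nhds (zeroPt, zeroPt)) := by
    refine Filter.Tendsto.prodMk_nhds tendsto_const_nhds ?_
    rw [tendsto_subtype_rng]
    have h0 : ∀ N : ℕ, (0:ℝ) ≤ 1 / (((σf N k : ℕ+):ℕ):ℝ) := by intro N; positivity
    have hle : ∀ N : ℕ, 1 / (((σf N k : ℕ+):ℕ):ℝ) ≤ 1 / ((N:ℝ) + 1) := by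
      intro N
      apply one_div_le_one_div_of_le (by positivity)
      have : (N+1 : ℕ) ≤ ((σf N k : ℕ+):ℕ) := hlt N
      exact_mod_cast this
    exact squeeze_zero h0 hle tendsto_one_div_add_atTop_nhds_zero_nat
  refine mem_closure_of_tendsto htend (Filter.Eventually.of_forall fun N => ?_)
  exact ⟨fPerm (σf N), ⟨σf N, hσf N, rfl⟩, by rw [fPerm_zero, fPerm_pt]⟩

lemma act_finite {Γ : Type*} (Ssub : Γ → Set (Equiv.Perm ℕ+))
    (hfin : ∀ α k, {m : ℕ+ | ∃ σ ∈ Ssub α, m = σ k}.Finite)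
    (α : Γ) {P : Set Bset} (hP : P.Finite) : (actSet P (Ssub α)).Finite := by
  have hsub : actSet P (Ssub α) ⊆ ⋃ x ∈ P, {y | ∃ σ ∈ Ssub α, y = fPerm σ x} := by
    rintro y ⟨x, hx, σ, hσ, rfl⟩; exact Set.mem_biUnion hx ⟨σ, hσ, rfl⟩
  refine Set.Finite.subset (Set.Finite.biUnion hP ?_) hsub
  intro x _
  rcases pt_cases x with rfl | ⟨k, rfl⟩
  · refine Set.Finite.subset (Set.finite_singleton zeroPt) ?_
    rintro y ⟨σ, hσ, rfl⟩; rw [fPerm_zero]; rfl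
  · refine Set.Finite.subset ((hfin α k).image pt) ?_
    rintro y ⟨σ, hσ, rfl⟩
    exact ⟨σ k, ⟨σ, hσ, rfl⟩, (fPerm_pt σ k).symm⟩

lemma fold_finite {Γ : Type*} (Ssub : Γ → Set (Equiv.Perm ℕ+))
    (hfin : ∀ α k, {m : ℕ+ | ∃ σ ∈ Ssub α, m = σ k}.Finite) :
    ∀ (l : List Γ) (P : Set Bset), P.Finite → ((l.map Ssub).foldl actSet P).Finite := by
  intro l
  induction l with
  | nil => intro P hP; exact hP
  | cons a t ih => intro P hP; exact ih _ (act_finite Ssub hfin a hP)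

-- the infinite cycle

noncomputable def eZ : ℕ+ ≃ ℤ := Equiv.pnatEquivNat.trans (Denumerable.eqv ℤ).symm

noncomputable def cyc : Equiv.Perm ℕ+ := (Equiv.permCongr eZ.symm) (Equiv.addRight (1:ℤ))

lemma cyc_apply (x : ℕ+) : cyc x = eZ.symm (eZ x + 1) := by
  simp [cyc]

lemma cyc_pow (m : ℕ) : ∀ x : ℕ+, (cyc ^ m) x = eZ.symm (eZ x + m) := by
  induction m with
  | zero => intro x; simp
  | succ m ih =>
    intro x
    rw [pow_succ', Equiv.Perm.mul_apply, cyc_apply, ih, Equiv.apply_symm_apply]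
    congr 1
    push_cast
    ring

lemma cyc_pow_inj : Function.Injective fun m : ℕ => (cyc ^ m) 1 := by
  intro a b h
  simp only [cyc_pow] at h
  have := eZ.symm.injective h
  omega


/-- `(𝔅,G)` with `G = {f_σ : σ a permutation of ℕ+}` is not
pseudo-co-decomposable to distal transformation semigroups: for every family of
subsemigroups of `G`, each containing the identity, whose union generates `G` and whose
orbit sets are invariant under permuting the factors, some member acts non-distally. -/
theorem stmt10 {Γ : Type*} (Ssub : Γ → Set (Equiv.Perm ℕ+))
    (hid : ∀ α, 1 ∈ Ssub α)
    (hclosed : ∀ α, ∀ σ ∈ Ssub α, ∀ τ ∈ Ssub α, σ * τ ∈ Ssub α)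
    (hgen : Subsemigroup.closure (⋃ α, Ssub α) = (⊤ : Subsemigroup (Equiv.Perm ℕ+)))
    (hpseudo : ∀ l l' : List Γ, l.Perm l' → ∀ x : Bset,
      (l.map Ssub).foldl actSet {x} = (l'.map Ssub).foldl actSet {x}) :
    ∃ α, ¬ IsDistalAction (permAct (Ssub α)) := by
  by_contra hcon
  push_neg at hcon
  have hfin : ∀ α k, {m : ℕ+ | ∃ σ ∈ Ssub α, m = σ k}.Finite :=
    fun α k => orb_finite (hcon α) k
  obtain ⟨l, hl⟩ := exists_list Ssub hgen cyc
  have hmem : ∀ m : ℕ, pt ((cyc ^ m) 1) ∈ (l.map Ssub).foldl actSet {pt 1} := by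
    intro m
    have h := powOrbit_mem Ssub hid hclosed hpseudo l cyc hl m (pt 1)
    rwa [fPerm_pt] at h
  have hF : ((l.map Ssub).foldl actSet {pt 1}).Finite :=
    fold_finite Ssub hfin l {pt 1} (Set.finite_singleton _)
  have hinf : ((l.map Ssub).foldl actSet {pt 1}).Infinite :=
    Set.infinite_of_injective_forall_mem (fun a b h => cyc_pow_inj (pt_inj h)) hmem
  exact hinf hF
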